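/- Semi-decidability of validity refutation over finite structures: if the sequent ⊢ α is not derivable in the sequent calculus of QML, then there exists a quantum modal structure S* with a finite set of worlds and a world i of S* such that α is not true at i in S*. -/
import Mathlib

/-- Formulas of quantum modal logic: atoms, conjunction, negation, box. -/
inductive Formula : Type
  | atom : ℕ → Formula
  | and  : Formula → Formula → Formula
  | neg  : Formula → Formula
  | box  : Formula → Formula
deriving DecidableEq

/-- A set `X ⊆ W` is `R_Q`-closed. -/
def RQClosed {W : Type} (RQ : W → W → Prop) (X : Set W) : Prop :=
  ∀ i : W, i ∈ X ↔ ∀ j : W, RQ i j → ∃ k : W, RQ j k ∧ k ∈ X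

/-- A quantum modal structure `⟨W, R_Q, R_M, ρ⟩`. -/
structure QMS where
  W : Type
  nonempty : Nonempty W
  RQ : W → W → Prop
  RM : W → W → Prop
  val : ℕ → Set W
  RQ_refl : ∀ i, RQ i i
  RQ_symm : ∀ i j, RQ i j → RQ j i
  RM_forced : ∀ i l, RM i l → ∀ j, RQ i j → RM j l
  val_closed : ∀ p, RQClosed RQ (val p)

/-- Truth of a formula at a world, relative to relations `RQ`, `RM` and valuation `v`. -/
def TruthOn {W : Type} (RQ RM : W → W → Prop) (v : ℕ → Set W) : W → Formula → Prop
  | i, .atom p  => i ∈ v p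
  | i, .and α β => TruthOn RQ RM v i α ∧ TruthOn RQ RM v i β
  | i, .neg α   => ∀ j, RQ i j → ¬ TruthOn RQ RM v j α
  | i, .box α   => ∀ l, RM i l → TruthOn RQ RM v l α

/-- Truth at a world of a quantum modal structure. -/
def Truth (S : QMS) : S.W → Formula → Prop := TruthOn S.RQ S.RM S.val

/-- A set of formulas is admissible: closed under subformulas and containing `¬p`
whenever it contains an atomic formula `p`. -/
def Admissible (Sg : Set Formula) : Prop :=
  (∀ α β, Formula.and α β ∈ Sg → α ∈ Sg ∧ β ∈ Sg) ∧
  (∀ α, Formula.neg α ∈ Sg → α ∈ Sg) ∧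
  (∀ α, Formula.box α ∈ Sg → α ∈ Sg) ∧
  (∀ p, Formula.atom p ∈ Sg → Formula.neg (Formula.atom p) ∈ Sg)

/-- `i ∼ j` : worlds `i` and `j` satisfy the same formulas of `Sg`. -/
def Sim (S : QMS) (Sg : Set Formula) (i j : S.W) : Prop :=
  ∀ α ∈ Sg, (Truth S i α ↔ Truth S j α)

/-- The setoid on worlds induced by an admissible set. -/
def worldSetoid (S : QMS) (Sg : Set Formula) : Setoid S.W where
  r := Sim S Sg
  iseqv := ⟨fun _ _ _ => Iff.rfl,
            fun h α hα => (h α hα).symm,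
            fun h1 h2 α hα => (h1 α hα).trans (h2 α hα)⟩

/-- The set of worlds `W* = W/∼` of the collapse. -/
def CW (S : QMS) (Sg : Set Formula) : Type := Quotient (worldSetoid S Sg)

/-- The equivalence class `[i]` of a world `i`. -/
def cls (S : QMS) (Sg : Set Formula) (i : S.W) : CW S Sg :=
  Quotient.mk (worldSetoid S Sg) i

/-- `R_Q*([i],[j])` iff there exist `i' ∼ i` and `j' ∼ j` with `R_Q(i',j')`. -/
def CRQ (S : QMS) (Sg : Set Formula) (x y : CW S Sg) : Prop :=
  ∃ i j : S.W, cls S Sg i = x ∧ cls S Sg j = y ∧ S.RQ i j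

/-- `R_M*([i],[l])` iff for every `□α ∈ Σ`, `i ⊨ □α` implies `l ⊨ α`. -/
def CRM (S : QMS) (Sg : Set Formula) (x y : CW S Sg) : Prop :=
  ∃ i l : S.W, cls S Sg i = x ∧ cls S Sg l = y ∧
    ∀ α, Formula.box α ∈ Sg → Truth S i (Formula.box α) → Truth S l α

/-- `ρ*(p) = {[i] : i ∈ ρ(p)}` if `p ∈ Σ`, and `ρ*(p) = ∅` otherwise. -/
def CVal (S : QMS) (Sg : Set Formula) (p : ℕ) : Set (CW S Sg) :=
  {x | Formula.atom p ∈ Sg ∧ ∃ i : S.W, cls S Sg i = x ∧ i ∈ S.val p}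

/-- Truth at a world of the collapse `S*`, defined by the same truth clauses
using `R_Q*`, `R_M*`, `ρ*`. -/
def CTruth (S : QMS) (Sg : Set Formula) : CW S Sg → Formula → Prop :=
  TruthOn (CRQ S Sg) (CRM S Sg) (CVal S Sg)

/-- Derivability of sequents `Γ ⊢ Δ` in the sequent calculus of QML. -/
inductive Deriv : Set Formula → Set Formula → Prop
  | ax (α : Formula) : Deriv {α} {α}
  | mem (Γ : Set Formula) (α : Formula) :
      Deriv Γ {Formula.box α, Formula.neg (Formula.box α)}
  | wkn (Γ Δ P Q : Set Formula) : Deriv Γ Δ → Deriv (P ∪ Γ) (Δ ∪ Q)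
  | cut (Γ₁ Γ₂ Δ₁ Δ₂ : Set Formula) (α : Formula) :
      Deriv Γ₁ (insert α Δ₁) → Deriv (insert α Γ₂) Δ₂ → Deriv (Γ₁ ∪ Γ₂) (Δ₁ ∪ Δ₂)
  | andl1 (α β : Formula) (Γ Δ : Set Formula) :
      Deriv (insert α Γ) Δ → Deriv (insert (Formula.and α β) Γ) Δ
  | andl2 (α β : Formula) (Γ Δ : Set Formula) :
      Deriv (insert β Γ) Δ → Deriv (insert (Formula.and α β) Γ) Δ
  | andr (α β : Formula) (Γ Δ : Set Formula) :
      Deriv Γ (insert α Δ) → Deriv Γ (insert β Δ) → Deriv Γ (insert (Formula.and α β) Δ)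
  | negl (α : Formula) (Γ Δ : Set Formula) :
      Deriv Γ (insert α Δ) → Deriv (insert (Formula.neg α) Γ) Δ
  | negr (α : Formula) (Δ : Set Formula) :
      Deriv {α} Δ → Deriv (Formula.neg '' Δ) {Formula.neg α}
  | negnegl (α : Formula) (Γ Δ : Set Formula) :
      Deriv (insert α Γ) Δ → Deriv (insert (Formula.neg (Formula.neg α)) Γ) Δ
  | negnegr (α : Formula) (Γ Δ : Set Formula) :
      Deriv Γ (insert α Δ) → Deriv Γ (insert (Formula.neg (Formula.neg α)) Δ)
  | k (α : Formula) (Γ : Set Formula) :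
      Deriv Γ {α} → Deriv (Formula.box '' Γ) {Formula.box α}

section FMPaux

/-- Subformula closure of a formula, augmented with negated atoms. -/
def sub : Formula → Finset Formula
  | .atom p => {.atom p, .neg (.atom p)}
  | .and a b => insert (.and a b) (sub a ∪ sub b)
  | .neg a => insert (.neg a) (sub a)
  | .box a => insert (.box a) (sub a)

lemma self_mem_sub (γ : Formula) : γ ∈ sub γ := by
  cases γ <;> simp [sub]

lemma mem_sub_and {γ a b} (h : Formula.and a b ∈ sub γ) :
    a ∈ sub γ ∧ b ∈ sub γ := by
  induction γ with
  | atom p => simp [sub] at h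
  | and c d ihc ihd =>
      simp only [sub, Finset.mem_insert, Finset.mem_union, Formula.and.injEq] at h ⊢
      rcases h with ⟨rfl, rfl⟩ | h | h
      · exact ⟨Or.inr (Or.inl (self_mem_sub a)), Or.inr (Or.inr (self_mem_sub b))⟩
      · exact ⟨Or.inr (Or.inl (ihc h).1), Or.inr (Or.inl (ihc h).2)⟩
      · exact ⟨Or.inr (Or.inr (ihd h).1), Or.inr (Or.inr (ihd h).2)⟩
  | neg c ihc =>
      simp only [sub, Finset.mem_insert, reduceCtorEq, false_or] at h ⊢
      exact ⟨Or.inr (ihc h).1, Or.inr (ihc h).2⟩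
  | box c ihc =>
      simp only [sub, Finset.mem_insert, reduceCtorEq, false_or] at h ⊢
      exact ⟨Or.inr (ihc h).1, Or.inr (ihc h).2⟩

lemma mem_sub_neg {γ a} (h : Formula.neg a ∈ sub γ) : a ∈ sub γ := by
  induction γ with
  | atom p =>
      simp only [sub, Finset.mem_insert, Finset.mem_singleton, reduceCtorEq, false_or,
        Formula.neg.injEq] at h
      subst h; simp [sub]
  | and c d ihc ihd =>
      simp only [sub, Finset.mem_insert, Finset.mem_union, reduceCtorEq, false_or] at h ⊢
      rcases h with h | h
      · exact Or.inr (Or.inl (ihc h))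
      · exact Or.inr (Or.inr (ihd h))
  | neg c ihc =>
      simp only [sub, Finset.mem_insert, Formula.neg.injEq] at h ⊢
      rcases h with rfl | h
      · exact Or.inr (self_mem_sub a)
      · exact Or.inr (ihc h)
  | box c ihc =>
      simp only [sub, Finset.mem_insert, reduceCtorEq, false_or] at h ⊢
      exact Or.inr (ihc h)

lemma mem_sub_box {γ a} (h : Formula.box a ∈ sub γ) : a ∈ sub γ := by
  induction γ with
  | atom p => simp [sub] at h
  | and c d ihc ihd =>
      simp only [sub, Finset.mem_insert, Finset.mem_union, reduceCtorEq, false_or] at h ⊢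
      rcases h with h | h
      · exact Or.inr (Or.inl (ihc h))
      · exact Or.inr (Or.inr (ihd h))
  | neg c ihc =>
      simp only [sub, Finset.mem_insert, reduceCtorEq, false_or] at h ⊢
      exact Or.inr (ihc h)
  | box c ihc =>
      simp only [sub, Finset.mem_insert, Formula.box.injEq] at h ⊢
      rcases h with rfl | h
      · exact Or.inr (self_mem_sub a)
      · exact Or.inr (ihc h)

lemma mem_sub_atom {γ p} (h : Formula.atom p ∈ sub γ) :
    Formula.neg (Formula.atom p) ∈ sub γ := by
  induction γ with
  | atom q =>
      simp only [sub, Finset.mem_insert, Finset.mem_singleton, reduceCtorEq, or_false,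
        Formula.atom.injEq] at h
      subst h; simp [sub]
  | and c d ihc ihd =>
      simp only [sub, Finset.mem_insert, Finset.mem_union, reduceCtorEq, false_or] at h
      simp only [sub, Finset.mem_insert, Finset.mem_union]
      rcases h with h | h
      · exact Or.inr (Or.inl (ihc h))
      · exact Or.inr (Or.inr (ihd h))
  | neg c ihc =>
      simp only [sub, Finset.mem_insert, reduceCtorEq, false_or] at h
      simp only [sub, Finset.mem_insert]
      exact Or.inr (ihc h)
  | box c ihc =>
      simp only [sub, Finset.mem_insert, reduceCtorEq, false_or] at h
      simp only [sub, Finset.mem_insert]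
      exact Or.inr (ihc h)

lemma sub_admissible (γ : Formula) : Admissible (↑(sub γ) : Set Formula) :=
  ⟨fun _ _ h => mem_sub_and h, fun _ h => mem_sub_neg h,
   fun _ h => mem_sub_box h, fun _ h => mem_sub_atom h⟩

variable {S : QMS} {Sg : Set Formula}

lemma sim_of_cls_eq {i j : S.W} (h : cls S Sg i = cls S Sg j) : Sim S Sg i j :=
  Quotient.exact h

lemma cls_exists_rep (x : CW S Sg) : ∃ i : S.W, cls S Sg i = x :=
  Quotient.exists_rep x

lemma box_up {i j : S.W} {β : Formula} (hq : S.RQ i j)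
    (hβ : Truth S j (Formula.box β)) : Truth S i (Formula.box β) :=
  fun l hl => hβ l (S.RM_forced i l hl j hq)

lemma CRQ_refl (x : CW S Sg) : CRQ S Sg x x := by
  obtain ⟨i, rfl⟩ := cls_exists_rep x
  exact ⟨i, i, rfl, rfl, S.RQ_refl i⟩

lemma CRQ_symm {x y : CW S Sg} (h : CRQ S Sg x y) : CRQ S Sg y x := by
  obtain ⟨i, j, hi, hj, hq⟩ := h
  exact ⟨j, i, hj, hi, S.RQ_symm i j hq⟩

lemma CRM_forced {x l : CW S Sg} (h : CRM S Sg x l) :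
    ∀ y, CRQ S Sg x y → CRM S Sg y l := by
  obtain ⟨i₀, l₀, hi₀, hl₀, H⟩ := h
  rintro y ⟨i', j', hi', hj', hq⟩
  refine ⟨j', l₀, hj', hl₀, fun β hβ hb => ?_⟩
  have h1 : Truth S i' (Formula.box β) := box_up hq hb
  have h2 : Truth S i₀ (Formula.box β) :=
    ((sim_of_cls_eq (hi'.trans hi₀.symm)) _ hβ).mp h1
  exact H β hβ h2

lemma CVal_closed (adm : Admissible Sg) (p : ℕ) :
    RQClosed (CRQ S Sg) (CVal S Sg p) := by
  intro x
  constructor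
  · intro hx y hxy
    exact ⟨x, CRQ_symm hxy, hx⟩
  · intro h
    obtain ⟨z, hxz, hz⟩ := h x (CRQ_refl x)
    have hp : Formula.atom p ∈ Sg := hz.1
    have hnp : Formula.neg (Formula.atom p) ∈ Sg := adm.2.2.2 p hp
    obtain ⟨i, rfl⟩ := cls_exists_rep x
    refine ⟨hp, i, rfl, ?_⟩
    rw [S.val_closed p i]
    intro j hij
    obtain ⟨z', hz'1, hz'2⟩ := h (cls S Sg j) ⟨i, j, rfl, rfl, hij⟩
    obtain ⟨j₁, k₁, hj₁, hk₁, hq₁⟩ := hz'1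
    obtain ⟨hp', m, hm, hmval⟩ := hz'2
    have hk₁p : k₁ ∈ S.val p :=
      ((sim_of_cls_eq (hk₁.trans hm.symm)) _ hp).mpr hmval
    -- j₁ does not satisfy ¬p
    have hj₁n : ¬ Truth S j₁ (Formula.neg (Formula.atom p)) := by
      intro hn
      exact hn k₁ hq₁ hk₁p
    have hjn : ¬ Truth S j (Formula.neg (Formula.atom p)) := by
      intro hn
      exact hj₁n (((sim_of_cls_eq hj₁) _ hnp).mpr hn)
    -- extract a witness
    by_contra hno
    push_neg at hno
    exact hjn (fun k hk => hno k hk)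

/-- The collapse of a structure by an admissible set. -/
def collapse (S : QMS) (Sg : Set Formula) (adm : Admissible Sg) : QMS where
  W := CW S Sg
  nonempty := ⟨cls S Sg (Classical.choice S.nonempty)⟩
  RQ := CRQ S Sg
  RM := CRM S Sg
  val := CVal S Sg
  RQ_refl := CRQ_refl
  RQ_symm := fun _ _ => CRQ_symm
  RM_forced := fun _ l h j => CRM_forced h j
  val_closed := CVal_closed adm

lemma truth_collapse (adm : Admissible Sg) :
    ∀ β, β ∈ Sg → ∀ i : S.W, (CTruth S Sg (cls S Sg i) β ↔ Truth S i β) := by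
  intro β
  induction β with
  | atom p =>
      intro hβ i
      constructor
      · rintro ⟨hp, i', hi', hval⟩
        exact ((sim_of_cls_eq hi') _ hβ).mp hval
      · intro hi
        exact ⟨hβ, i, rfl, hi⟩
  | and a b iha ihb =>
      intro hβ i
      obtain ⟨ha, hb⟩ := adm.1 a b hβ
      exact and_congr (iha ha i) (ihb hb i)
  | neg a iha =>
      intro hβ i
      have ha : a ∈ Sg := adm.2.1 a hβ
      constructor
      · intro hC j hij
        have := hC (cls S Sg j) ⟨i, j, rfl, rfl, hij⟩
        exact fun h => this ((iha ha j).mpr h)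
      · rintro hT y ⟨i', j', hi', hj', hq⟩ hCy
        have hi'T : Truth S i' (Formula.neg a) :=
          ((sim_of_cls_eq hi') _ hβ).mpr hT
        subst hj'
        exact hi'T j' hq ((iha ha j').mp hCy)
  | box a iha =>
      intro hβ i
      have ha : a ∈ Sg := adm.2.2.1 a hβ
      constructor
      · intro hC l hil
        have : CRM S Sg (cls S Sg i) (cls S Sg l) :=
          ⟨i, l, rfl, rfl, fun β' _ hb => hb l hil⟩
        exact (iha ha l).mp (hC _ this)
      · rintro hT y ⟨i₀, l₀, hi₀, hl₀, H⟩
        have hi₀T : Truth S i₀ (Formula.box a) :=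
          ((sim_of_cls_eq hi₀) _ hβ).mpr hT
        subst hl₀
        exact (iha ha l₀).mpr (H a hβ hi₀T)

lemma finite_CW (hfin : Sg.Finite) : Finite (CW S Sg) := by
  have : Finite Sg := hfin.to_subtype
  refine Finite.of_injective
    (Quotient.lift (fun i (β : Sg) => Truth S i (β : Formula))
      (fun a b hab => funext fun β => propext (hab β β.2))) ?_
  intro x y
  refine Quotient.inductionOn₂ x y ?_
  intro a b hab
  exact Quotient.sound fun β hβ => iff_of_eq (congrFun hab ⟨β, hβ⟩)

end FMPaux

/-- If `⊢ α` is not derivable, then (using completeness of QML as a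
hypothesis, together with the finite model property) there is a quantum modal structure
with finitely many worlds falsifying `α` at some world. -/
theorem refutation_in_finite_structure (α : Formula)
    (completeness : ¬ Deriv ∅ {α} → ∃ S : QMS, ∃ i : S.W, ¬ Truth S i α)
    (h : ¬ Deriv ∅ {α}) :
    ∃ T : QMS, Finite T.W ∧ ∃ i : T.W, ¬ Truth T i α := by
  obtain ⟨S, i, hi⟩ := completeness h
  have adm := sub_admissible α
  refine ⟨collapse S (↑(sub α)) adm, ?_, cls S (↑(sub α)) i, ?_⟩
  · exact finite_CW (Finset.finite_toSet (sub α))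
  · intro hT
    exact hi ((truth_collapse adm α (by exact_mod_cast self_mem_sub α) i).mp hT)
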